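/- For vectors a, b ∈ F₄ⁿ, the trace of the Hermitian inner product equals the symplectic product of their binary images: Tr⟨a,b⟩ = γ(a) ⊙ γ(b)ᵀ, where ⟨a,b⟩ = Σ_i a_i† b_i and γ is applied coordinatewise. -/

import Mathlib

/-!
Write `T(x) = x + x²`. Since `F₄` has characteristic 2, `T` is additive, and since `x⁴ = x`,
`T(x)` is idempotent, hence lies in the prime field: `tr2` is `T` read through the injective
embedding `ℤ/2 → F₄`. So it suffices to prove everything coordinatewise inside `F₄`, where
`T(a²b) = T(ωa)·T(ω̄b) + T(ω̄a)·T(ωb)` is a polynomial identity modulo `ω² = ω + 1` and `a⁴ = a`.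
-/

open scoped Classical
open Finset

/-- The trace F₄ → F₂, Tr(x) = x + x², with values read in ℤ/2. -/
noncomputable def tr2 (x : GaloisField 2 2) : ZMod 2 := if x + x ^ 2 = 0 then 0 else 1

/-- γ : F₄ → (ℤ/2)², γ(a) = (Tr(ωa), Tr(ω̄a)): 0 ↦ 00, ω̄ ↦ 01, 1 ↦ 11, ω ↦ 10. -/
noncomputable def gammaMap (ω : GaloisField 2 2) (a : GaloisField 2 2) : ZMod 2 × ZMod 2 :=
  (tr2 (ω * a), tr2 ((ω + 1) * a))

theorem CharTwo.sq_mul_add_sq_eq_of_sq_eq_add_one {R : Type*} [CommRing R] [CharP R 2]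
    {ω a : R} (hω : ω ^ 2 = ω + 1) (ha : a ^ 4 = a) (b : R) :
    a ^ 2 * b + (a ^ 2 * b) ^ 2 =
      (ω * a + (ω * a) ^ 2) * ((ω + 1) * b + ((ω + 1) * b) ^ 2) +
      ((ω + 1) * a + ((ω + 1) * a) ^ 2) * (ω * b + (ω * b) ^ 2) := by
  grind

theorem GaloisField.two_two_pow_four (x : GaloisField 2 2) : x ^ 4 = x := by
  have := Fintype.ofFinite (GaloisField 2 2)
  have hcard : Fintype.card (GaloisField 2 2) = 4 := by
    rw [← Nat.card_eq_fintype_card, GaloisField.card 2 2 two_ne_zero]; norm_num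
  simpa [hcard] using FiniteField.pow_card x

theorem algebraMap_tr2 (x : GaloisField 2 2) :
    algebraMap (ZMod 2) (GaloisField 2 2) (tr2 x) = x + x ^ 2 := by
  have hidem : IsIdempotentElem (x + x ^ 2) := by
    unfold IsIdempotentElem
    grind [GaloisField.two_two_pow_four x]
  rcases IsIdempotentElem.iff_eq_zero_or_one.mp hidem with h | h <;> simp [tr2, h]

theorem tr2_add (x y : GaloisField 2 2) : tr2 (x + y) = tr2 x + tr2 y := by
  apply (algebraMap (ZMod 2) (GaloisField 2 2)).injective
  simp only [map_add, algebraMap_tr2]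
  grind

theorem tr2_sum {ι : Type*} (s : Finset ι) (f : ι → GaloisField 2 2) :
    tr2 (∑ i ∈ s, f i) = ∑ i ∈ s, tr2 (f i) :=
  map_sum (AddMonoidHom.mk' tr2 tr2_add) f s

theorem tr2_sq_mul {ω : GaloisField 2 2} (hω : ω ^ 2 = ω + 1) (a b : GaloisField 2 2) :
    tr2 (a ^ 2 * b) =
      (gammaMap ω a).1 * (gammaMap ω b).2 + (gammaMap ω b).1 * (gammaMap ω a).2 := by
  apply (algebraMap (ZMod 2) (GaloisField 2 2)).injective
  simp only [gammaMap, map_add, map_mul, algebraMap_tr2]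
  rw [CharTwo.sq_mul_add_sq_eq_of_sq_eq_add_one hω (GaloisField.two_two_pow_four a)]
  ring

/-- For a, b ∈ F₄ⁿ : Tr⟨a,b⟩ = γ(a) ⊙ γ(b)ᵀ, where ⟨a,b⟩ = Σ_i a_i† b_i with a† = a²,
and γ is applied coordinatewise (first coordinates give z, second give x). -/
theorem trace_inner_eq_symp_vec (ω : GaloisField 2 2) (hω : ω ^ 2 = ω + 1)
    (n : ℕ) (a b : Fin n → GaloisField 2 2) :
    tr2 (∑ i, (a i) ^ 2 * b i) =
      (∑ i, (gammaMap ω (a i)).1 * (gammaMap ω (b i)).2) +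
      (∑ i, (gammaMap ω (b i)).1 * (gammaMap ω (a i)).2) := by
  rw [tr2_sum, ← sum_add_distrib]
  exact sum_congr rfl fun i _ => tr2_sq_mul hω (a i) (b i)
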